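/- arXiv:2311.00881 — 4 statements merged into one kernel-verified Lean document; each statement's English description precedes it below -/
import Mathlib

section
/- Let b : ℕ → ℤ be the sequence with b_j = 0 for j < 0, b₀ = 1, and b_k = 4b_{k-1} - 2b_{k-2} - 3b_{k-3} + 2b_{k-4} for k ≥ 1. Then the formal power series ∑_{k≥0} b_k t^k in ℤ⟦t⟧ satisfies (1 - t)(1 - 3t - t² + 2t³) · (∑_{k≥0} b_k t^k) = 1. -/
open PowerSeries

section

variable {R : Type*} [CommRing R] {b : ℤ → R}

theorem coeff_X_pow_mul_mk_of_neg (hneg : ∀ j : ℤ, j < 0 → b j = 0) (n k : ℕ) :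
    coeff n (X ^ k * PowerSeries.mk fun m : ℕ => b m) = b (n - k) := by
  rw [coeff_X_pow_mul']
  split_ifs with h
  · rw [coeff_mk, Nat.cast_sub h]
  · exact (hneg _ (by omega)).symm

end

theorem stmt_3 (b : ℤ → ℤ) (hneg : ∀ j : ℤ, j < 0 → b j = 0) (h0 : b 0 = 1)
    (hrec : ∀ k : ℤ, 1 ≤ k →
      b k = 4 * b (k - 1) - 2 * b (k - 2) - 3 * b (k - 3) + 2 * b (k - 4)) :
    ((1 - X) * (1 - 3 * X - X ^ 2 + 2 * X ^ 3) : PowerSeries ℤ) *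
      PowerSeries.mk (fun k : ℕ => b (k : ℤ)) = 1 := by
  have expand : ∀ B : PowerSeries ℤ, (1 - X) * (1 - 3 * X - X ^ 2 + 2 * X ^ 3) * B =
      X ^ 0 * B - C 4 * (X ^ 1 * B) + C 2 * (X ^ 2 * B) + C 3 * (X ^ 3 * B)
        - C 2 * (X ^ 4 * B) := fun B => by
    simp only [map_ofNat]
    ring
  ext n
  simp only [expand, map_sub, map_add, coeff_C_mul, coeff_X_pow_mul_mk_of_neg hneg, coeff_one,
    Nat.cast_zero, Nat.cast_one, Nat.cast_ofNat, sub_zero]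
  rcases Nat.eq_zero_or_pos n with rfl | hn
  · simp [h0, hneg]
  · rw [if_neg hn.ne', hrec n (by exact_mod_cast hn)]
    ring
end

section
/- The cubic polynomial 2t³ - t² - 3t + 1 has exactly one root in the open interval (0, 1), and this root r satisfies 0.32 < r < 0.322, so that 1/r > 3.1; in particular 1/r > (1 + √5)/2. -/
theorem stmt_5 :
    ∃ r : ℝ, 0 < r ∧ r < 1 ∧ 2 * r ^ 3 - r ^ 2 - 3 * r + 1 = 0 ∧
      (∀ s : ℝ, 0 < s → s < 1 → 2 * s ^ 3 - s ^ 2 - 3 * s + 1 = 0 → s = r) ∧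
      0.32 < r ∧ r < 0.322 ∧ 3.1 < 1 / r ∧ (1 + Real.sqrt 5) / 2 < 1 / r := by
  set f : ℝ → ℝ := fun t => 2 * t ^ 3 - t ^ 2 - 3 * t + 1 with hf
  have hcont : ContinuousOn f (Set.Icc (0.32 : ℝ) 0.322) := by
    apply Continuous.continuousOn; fun_prop
  have hmem : (0 : ℝ) ∈ Set.Icc (f 0.322) (f 0.32) := by
    constructor <;> norm_num [hf]
  obtain ⟨r, hrIcc, hr0⟩ := intermediate_value_Icc' (by norm_num) hcont hmem
  obtain ⟨hr1, hr2⟩ := hrIcc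
  have hfr : 2 * r ^ 3 - r ^ 2 - 3 * r + 1 = 0 := hr0
  have hlt1 : (0.32 : ℝ) < r := by
    rcases lt_or_eq_of_le hr1 with h | h
    · exact h
    · exfalso; rw [← h] at hfr; norm_num at hfr
  have hlt2 : r < (0.322 : ℝ) := by
    rcases lt_or_eq_of_le hr2 with h | h
    · exact h
    · exfalso; rw [h] at hfr; norm_num at hfr
  have hrpos : (0 : ℝ) < r := by linarith
  refine ⟨r, hrpos, by linarith, hfr, ?_, hlt1, hlt2, ?_, ?_⟩
  · intro s hs0 hs1 hfs
    have key : (s - r) * (2 * (s ^ 2 + s * r + r ^ 2) - (s + r) - 3) = 0 := by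
      linear_combination hfs - hfr
    have hneg : 2 * (s ^ 2 + s * r + r ^ 2) - (s + r) - 3 < 0 := by nlinarith
    have := mul_eq_zero.mp key
    rcases this with h | h
    · linarith
    · linarith
  · rw [lt_div_iff₀ hrpos]; nlinarith
  · have hs5 : Real.sqrt 5 < 3 := by
      have := Real.sq_sqrt (by norm_num : (5:ℝ) ≥ 0)
      nlinarith [Real.sqrt_nonneg (5:ℝ)]
    have : 3.1 < 1 / r := by rw [lt_div_iff₀ hrpos]; nlinarith
    linarith
end

section
/- The cubic 2t³ - t² - 3t + 1 and the quadratic t² + t - 1 (whose positive root is 1/φ where φ is the golden ratio) satisfy: the unique root of the cubic in (0,1) is strictly smaller than the positive root (√5 - 1)/2 of the quadratic. Equivalently, the growth rate 1/r₂ of SB₃⁺ strictly exceeds the golden ratio (1+√5)/2. -/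
lemma root_small (s : ℝ) (hs1 : s < 1) (hf : 2 * s ^ 3 - s ^ 2 - 3 * s + 1 = 0) :
    s < 2 / 5 := by
  by_contra h
  push_neg at h
  nlinarith [sq_nonneg (s - 2/5), sq_nonneg (1 - s), mul_pos (by linarith : (0:ℝ) < s) (by linarith : (0:ℝ) < 1 - s)]

theorem stmt_13 :
    ∃ r : ℝ, 0 < r ∧ r < 1 ∧ 2 * r ^ 3 - r ^ 2 - 3 * r + 1 = 0 ∧
      (∀ s : ℝ, 0 < s → s < 1 → 2 * s ^ 3 - s ^ 2 - 3 * s + 1 = 0 → s = r) ∧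
      r < (Real.sqrt 5 - 1) / 2 ∧ (1 + Real.sqrt 5) / 2 < 1 / r := by
  have hc : ContinuousOn (fun t : ℝ => 2 * t ^ 3 - t ^ 2 - 3 * t + 1) (Set.Icc 0 1) := by
    fun_prop
  have h01 : (0:ℝ) ≤ 1 := by norm_num
  have hiv := intermediate_value_Icc' h01 hc
  have h0 : (0:ℝ) ∈ Set.Icc ((fun t : ℝ => 2 * t ^ 3 - t ^ 2 - 3 * t + 1) 1)
      ((fun t : ℝ => 2 * t ^ 3 - t ^ 2 - 3 * t + 1) 0) := by
    simp only [Set.mem_Icc]; norm_num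
  obtain ⟨r, hrmem, hfr⟩ := hiv h0
  simp only at hfr
  obtain ⟨hr0, hr1⟩ := hrmem
  have hr0' : 0 < r := by
    rcases hr0.lt_or_eq with h | h
    · exact h
    · exfalso; rw [← h] at hfr; norm_num at hfr
  have hr1' : r < 1 := by
    rcases hr1.lt_or_eq with h | h
    · exact h
    · exfalso; rw [h] at hfr; norm_num at hfr
  have hrs : r < 2 / 5 := root_small r hr1' hfr
  have h5 : Real.sqrt 5 ^ 2 = 5 := Real.sq_sqrt (by norm_num)
  have h5n : 0 ≤ Real.sqrt 5 := Real.sqrt_nonneg 5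
  have h5gt : 2 < Real.sqrt 5 := by nlinarith
  have h5lt : Real.sqrt 5 < 3 := by nlinarith
  refine ⟨r, hr0', hr1', hfr, ?_, ?_, ?_⟩
  · intro s hs0 hs1 hfs
    have hss : s < 2 / 5 := root_small s hs1 hfs
    have key : (s - r) * (2 * (s^2 + s*r + r^2) - (s + r) - 3) = 0 := by ring_nf; nlinarith [hfs, hfr]
    have hneg : 2 * (s^2 + s*r + r^2) - (s + r) - 3 < 0 := by nlinarith
    rcases mul_eq_zero.mp key with h | h
    · linarith
    · linarith
  · nlinarith
  · rw [div_lt_div_iff₀ (by norm_num) hr0']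
    nlinarith
end

section
/- Define f₂(t) = t/(1 - 3t - t² + 2t³), f₄(t) = t·f₂(t), and f₇(t) = (t/(1-2t))·f₂(t) + t/(1-2t), as rational functions over ℝ. Then these satisfy the linear system: (1 - t⁻¹)f₂ + f₄ + 2f₇ = -1, f₂ + (1 - t⁻²)f₄ + 2f₇ = -1, and f₂ + (2 - t⁻¹)f₇ = -1 (as identities of rational functions in t). -/
noncomputable def f₂ (t : ℝ) : ℝ := t / (1 - 3 * t - t ^ 2 + 2 * t ^ 3)
noncomputable def f₄ (t : ℝ) : ℝ := t * f₂ t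
noncomputable def f₇ (t : ℝ) : ℝ := (t / (1 - 2 * t)) * f₂ t + t / (1 - 2 * t)

/-! Since `t + (1 - 3t - t² + 2t³) = (1 - 2t)(1 - t²)`, the function `f₇ = t/(1 - 2t) · (f₂ + 1)`
collapses to `(1 - t²) f₂`. Substituting this and `f₄ = t f₂`, each of the three equations becomes
`(3 + t - 2t² - t⁻¹) f₂ = -1`, and this coefficient is `-(1 - 3t - t² + 2t³) / t`, the negated
reciprocal of `f₂`. -/

theorem f₇_eq_one_sub_sq_mul_f₂ {t : ℝ} (ht2 : 1 - 2 * t ≠ 0)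
    (htD : 1 - 3 * t - t ^ 2 + 2 * t ^ 3 ≠ 0) : f₇ t = (1 - t ^ 2) * f₂ t := by
  have hf₂_add_one :
      f₂ t + 1 = (1 - 2 * t) * ((1 - t ^ 2) / (1 - 3 * t - t ^ 2 + 2 * t ^ 3)) := by
    rw [f₂, div_add_one htD, mul_div_assoc']
    ring
  calc f₇ t = t / (1 - 2 * t) * (f₂ t + 1) := by rw [f₇]; ring
    _ = (1 - t ^ 2) * f₂ t := by
      rw [hf₂_add_one, ← mul_assoc, div_mul_cancel₀ t ht2, f₂]
      ring

theorem coeff_mul_f₂ {t : ℝ} (ht : t ≠ 0) (htD : 1 - 3 * t - t ^ 2 + 2 * t ^ 3 ≠ 0) :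
    (3 + t - 2 * t ^ 2 - t⁻¹) * f₂ t = -1 := by
  have hD : 1 - 3 * t - t ^ 2 + 2 * t ^ 3 = -t * (3 + t - 2 * t ^ 2 - t⁻¹) := by
    field_simp
    ring
  rw [f₂, hD, mul_div_assoc', div_eq_iff (hD ▸ htD)]
  ring

theorem stmt_16 (t : ℝ) (ht : t ≠ 0) (ht2 : 1 - 2 * t ≠ 0)
    (htD : 1 - 3 * t - t ^ 2 + 2 * t ^ 3 ≠ 0) :
    (1 - t⁻¹) * f₂ t + f₄ t + 2 * f₇ t = -1 ∧
    f₂ t + (1 - (t ^ 2)⁻¹) * f₄ t + 2 * f₇ t = -1 ∧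
    f₂ t + (2 - t⁻¹) * f₇ t = -1 := by
  rw [f₄, f₇_eq_one_sub_sq_mul_f₂ ht2 htD, ← coeff_mul_f₂ ht htD]
  refine ⟨by ring, ?_, ?_⟩ <;> field_simp <;> ring
end
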